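/- Let G be a simple graph, let k ≥ 1 be an integer, and let H be the (2k)-subdivision of G. Then for every independent set S of H there exists an independent set S' of H with |S'| ≥ |S| such that for every edge e of G, S' contains exactly k of the 2k inner path nodes of e; consequently, for every edge e of G at most one of its two endpoints belongs to S'. -/

import Mathlib

/-- A set of vertices is independent if no two of its elements are adjacent. -/
def IsIndepSet {V : Type*} (G : SimpleGraph V) (S : Set V) : Prop :=
  ∀ u ∈ S, ∀ w ∈ S, ¬ G.Adj u w

/-- `H` is the `(2k)`-subdivision of `G`: every edge `e = {u,v}` of `G` is replaced by
a path `(u, w^e_1, …, w^e_{2k}, v)` with `2k` new inner vertices, distinct inner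
vertices for distinct edges. -/
structure IsSubdivision2k {V W : Type*} (G : SimpleGraph V) (k : ℕ) (H : SimpleGraph W) where
  /-- images of the original vertices -/
  vmap : V → W
  /-- the inner path nodes of each edge -/
  inner : G.edgeSet → Fin (2 * k) → W
  /-- a choice of the two endpoints of each edge -/
  ends : G.edgeSet → V × V
  ends_eq : ∀ e : G.edgeSet, (e : Sym2 V) = s((ends e).1, (ends e).2)
  vmap_inj : Function.Injective vmap
  inner_inj : Function.Injective fun pr : G.edgeSet × Fin (2 * k) => inner pr.1 pr.2
  vmap_ne_inner : ∀ (a : V) (e : G.edgeSet) (i : Fin (2 * k)), vmap a ≠ inner e i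
  cover : ∀ w : W, (∃ a : V, w = vmap a) ∨ ∃ (e : G.edgeSet) (i : Fin (2 * k)), w = inner e i
  adj_iff : ∀ x y : W, H.Adj x y ↔
    (∃ (e : G.edgeSet) (i j : Fin (2 * k)), (i : ℕ) + 1 = (j : ℕ) ∧
        ((x = inner e i ∧ y = inner e j) ∨ (x = inner e j ∧ y = inner e i))) ∨
    (∃ (e : G.edgeSet) (i : Fin (2 * k)), (i : ℕ) = 0 ∧
        ((x = vmap (ends e).1 ∧ y = inner e i) ∨ (y = vmap (ends e).1 ∧ x = inner e i))) ∨
    (∃ (e : G.edgeSet) (i : Fin (2 * k)), (i : ℕ) = 2 * k - 1 ∧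
        ((x = vmap (ends e).2 ∧ y = inner e i) ∨ (y = vmap (ends e).2 ∧ x = inner e i)))

/-!
Keep the original vertices of `S`, except that for every edge of `G` with both endpoints
in `S` the second endpoint is dropped; call the result `A`, an independent set of `G`.
On each subdivided edge take the `k` inner nodes of the parity class that avoids the
neighbours of the endpoints in `A`. This loses nothing: `S` meets the path of `2k` inner
nodes of an edge in at most `k` vertices, and in at most `k - 1` when both endpoints of
the edge lie in `S`, which pays for the dropped endpoint.
-/

open Set

theorem Set.ncard_eq_sum_ite {α : Type*} [Fintype α] (s : Set α) [DecidablePred (· ∈ s)] :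
    s.ncard = ∑ a, if a ∈ s then 1 else 0 := by
  rw [ncard_eq_toFinset_card', ← Finset.card_filter, filter_mem_univ_eq_toFinset]

theorem Fin.ncard_le_of_no_two_consecutive {n m b : ℕ} {s : Set (Fin n)}
    (hbound : ∀ i ∈ s, m ≤ (i : ℕ) ∧ (i : ℕ) < b)
    (hcons : ∀ i ∈ s, ∀ j ∈ s, (i : ℕ) + 1 ≠ j) :
    s.ncard ≤ (b - m + 1) / 2 := by
  -- `i ↦ (i - m) / 2` is injective on `s` because `s` has no two consecutive elements
  calc s.ncard ≤ (Iio ((b - m + 1) / 2)).ncard := by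
        refine ncard_le_ncard_of_injOn (fun i => ((i : ℕ) - m) / 2) ?_ ?_
        · intro i hi
          have := hbound i hi
          simp only [mem_Iio]
          omega
        · intro i hi j hj hij
          have := hbound i hi
          have := hbound j hj
          have := hcons i hi j hj
          have := hcons j hj i hi
          simp only at hij
          omega
    _ = (b - m + 1) / 2 := ncard_Iio_nat _

theorem Fin.ncard_setOf_val_mod_two_eq (k : ℕ) {r : ℕ} (hr : r < 2) :
    {i : Fin (2 * k) | (i : ℕ) % 2 = r}.ncard = k := by
  have hrange : {i : Fin (2 * k) | (i : ℕ) % 2 = r} =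
      range fun j : Fin k => (⟨2 * j + r, by omega⟩ : Fin (2 * k)) := by
    ext i
    simp only [mem_ofPred_eq, mem_range, Fin.ext_iff]
    constructor
    · intro h
      exact ⟨⟨i / 2, by omega⟩, by simp only; omega⟩
    · rintro ⟨j, hj⟩
      omega
  rw [hrange, ← image_univ, ncard_image_of_injective _ fun a b hab => by
    simp only [Fin.ext_iff] at hab ⊢; omega]
  simp

namespace IsSubdivision2k

variable {V W : Type*} {G : SimpleGraph V} {k : ℕ} {H : SimpleGraph W}
  (sub : IsSubdivision2k G k H)

theorem inner_eq_inner_iff {e e' : G.edgeSet} {i i' : Fin (2 * k)} :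
    sub.inner e i = sub.inner e' i' ↔ e = e' ∧ i = i' :=
  ⟨fun h => Prod.ext_iff.1 (sub.inner_inj (a₁ := (e, i)) (a₂ := (e', i')) h),
    fun h => h.1 ▸ h.2 ▸ rfl⟩

theorem inner_injective (e : G.edgeSet) : Function.Injective (sub.inner e) :=
  fun _ _ h => (sub.inner_eq_inner_iff.1 h).2

theorem adj_inner_inner {e : G.edgeSet} {i j : Fin (2 * k)} (h : (i : ℕ) + 1 = j) :
    H.Adj (sub.inner e i) (sub.inner e j) :=
  (sub.adj_iff _ _).2 (Or.inl ⟨e, i, j, h, Or.inl ⟨rfl, rfl⟩⟩)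

theorem adj_vmap_fst_inner {e : G.edgeSet} {i : Fin (2 * k)} (h : (i : ℕ) = 0) :
    H.Adj (sub.vmap (sub.ends e).1) (sub.inner e i) :=
  (sub.adj_iff _ _).2 (Or.inr (Or.inl ⟨e, i, h, Or.inl ⟨rfl, rfl⟩⟩))

theorem adj_vmap_snd_inner {e : G.edgeSet} {i : Fin (2 * k)} (h : (i : ℕ) = 2 * k - 1) :
    H.Adj (sub.vmap (sub.ends e).2) (sub.inner e i) :=
  (sub.adj_iff _ _).2 (Or.inr (Or.inr ⟨e, i, h, Or.inl ⟨rfl, rfl⟩⟩))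

noncomputable def vertexEquiv : V ⊕ (G.edgeSet × Fin (2 * k)) ≃ W :=
  Equiv.ofBijective (Sum.elim sub.vmap fun p => sub.inner p.1 p.2)
    ⟨sub.vmap_inj.sumElim sub.inner_inj fun a p => sub.vmap_ne_inner a p.1 p.2, fun w => by
      rcases sub.cover w with ⟨a, rfl⟩ | ⟨e, i, rfl⟩
      exacts [⟨.inl a, rfl⟩, ⟨.inr (e, i), rfl⟩]⟩

theorem ncard_eq_ncard_preimage_vmap_add_sum [Fintype V] [Fintype G.edgeSet] (T : Set W) :
    T.ncard = (sub.vmap ⁻¹' T).ncard + ∑ e, (sub.inner e ⁻¹' T).ncard := by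
  classical
  have : Fintype W := Fintype.ofEquiv _ sub.vertexEquiv
  simp only [ncard_eq_sum_ite, ← sub.vertexEquiv.sum_comp, Fintype.sum_sum_type,
    Fintype.sum_prod_type]
  rfl

theorem ncard_inter_range_inner (T : Set W) (e : G.edgeSet) :
    (T ∩ range (sub.inner e)).ncard = (sub.inner e ⁻¹' T).ncard := by
  rw [← image_preimage_eq_inter_range, ncard_image_of_injective _ (sub.inner_injective e)]

def edgesWithin (A : Set V) : Set G.edgeSet :=
  {e | (sub.ends e).1 ∈ A ∧ (sub.ends e).2 ∈ A}

variable {S : Set W}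

theorem preimage_inner_no_two_consecutive (hS : IsIndepSet H S) (e : G.edgeSet) :
    ∀ i ∈ sub.inner e ⁻¹' S, ∀ j ∈ sub.inner e ⁻¹' S, (i : ℕ) + 1 ≠ j :=
  fun _ hi _ hj hij => hS _ hi _ hj (sub.adj_inner_inner hij)

theorem ncard_preimage_inner_le (hS : IsIndepSet H S) (e : G.edgeSet) :
    (sub.inner e ⁻¹' S).ncard ≤ k := by
  have := Fin.ncard_le_of_no_two_consecutive (m := 0) (b := 2 * k)
    (fun i _ => ⟨i.val.zero_le, i.isLt⟩) (sub.preimage_inner_no_two_consecutive hS e)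
  omega

theorem ncard_preimage_inner_lt (hS : IsIndepSet H S) (hk : 1 ≤ k) {e : G.edgeSet}
    (he : e ∈ sub.edgesWithin (sub.vmap ⁻¹' S)) : (sub.inner e ⁻¹' S).ncard < k := by
  have hbound : ∀ i ∈ sub.inner e ⁻¹' S, 1 ≤ (i : ℕ) ∧ (i : ℕ) < 2 * k - 1 := by
    intro i hi
    have h0 : (i : ℕ) ≠ 0 := fun h => hS _ he.1 _ hi (sub.adj_vmap_fst_inner h)
    have h1 : (i : ℕ) ≠ 2 * k - 1 := fun h => hS _ he.2 _ hi (sub.adj_vmap_snd_inner h)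
    have := i.isLt
    omega
  have := Fin.ncard_le_of_no_two_consecutive hbound
    (sub.preimage_inner_no_two_consecutive hS e)
  omega

theorem ncard_edgesWithin_add_sum_le [Fintype G.edgeSet] (hS : IsIndepSet H S) (hk : 1 ≤ k) :
    (sub.edgesWithin (sub.vmap ⁻¹' S)).ncard + ∑ e, (sub.inner e ⁻¹' S).ncard ≤
      ∑ _e : G.edgeSet, k := by
  classical
  rw [ncard_eq_sum_ite, ← Finset.sum_add_distrib]
  refine Finset.sum_le_sum fun e _ => ?_
  split_ifs with he
  · have := sub.ncard_preimage_inner_lt hS hk he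
    omega
  · simpa using sub.ncard_preimage_inner_le hS e

/-- Odd indices are taken exactly when the first endpoint of `e` is in `A`. So `inner e 0` is
never taken next to a vertex of `A`, and `inner e (2k-1)` only when the first endpoint is in
`A`, in which case the second one is not, provided `A` is independent. -/
def lift (A : Set V) : Set W :=
  sub.vmap '' A ∪ ⋃ e, sub.inner e '' {i | (i : ℕ) % 2 = 1 ↔ (sub.ends e).1 ∈ A}

variable (A : Set V)

theorem vmap_mem_lift {a : V} : sub.vmap a ∈ sub.lift A ↔ a ∈ A := by
  refine ⟨?_, fun h => Or.inl (mem_image_of_mem _ h)⟩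
  rintro (⟨b, hb, hba⟩ | h)
  · exact sub.vmap_inj hba ▸ hb
  · obtain ⟨e, i, -, hi⟩ := mem_iUnion.1 h
    exact absurd hi.symm (sub.vmap_ne_inner a e i)

theorem inner_mem_lift {e : G.edgeSet} {i : Fin (2 * k)} :
    sub.inner e i ∈ sub.lift A ↔ ((i : ℕ) % 2 = 1 ↔ (sub.ends e).1 ∈ A) := by
  refine ⟨?_, fun h => Or.inr (mem_iUnion.2 ⟨e, mem_image_of_mem _ h⟩)⟩
  rintro (⟨a, -, ha⟩ | h)
  · exact absurd ha (sub.vmap_ne_inner a e i)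
  · obtain ⟨e', i', hi', h⟩ := mem_iUnion.1 h
    obtain ⟨rfl, rfl⟩ := sub.inner_eq_inner_iff.1 h
    exact hi'

theorem ncard_preimage_inner_lift (e : G.edgeSet) :
    (sub.inner e ⁻¹' sub.lift A).ncard = k := by
  by_cases h : (sub.ends e).1 ∈ A
  · convert Fin.ncard_setOf_val_mod_two_eq k (r := 1) (by omega) using 2
    ext i
    simp [sub.inner_mem_lift, h]
  · convert Fin.ncard_setOf_val_mod_two_eq k (r := 0) (by omega) using 2
    ext i
    simp [sub.inner_mem_lift, h]

theorem ncard_lift [Fintype V] [Fintype G.edgeSet] :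
    (sub.lift A).ncard = A.ncard + ∑ _e : G.edgeSet, k := by
  simp only [sub.ncard_eq_ncard_preimage_vmap_add_sum, sub.ncard_preimage_inner_lift A]
  exact congrArg (· + _) (congrArg _ (ext fun _ => sub.vmap_mem_lift A))

theorem isIndepSet_lift (hA : sub.edgesWithin A = ∅) : IsIndepSet H (sub.lift A) := by
  intro u hu w hw huw
  rcases (sub.adj_iff u w).1 huw with
    ⟨e, i, j, hij, ⟨rfl, rfl⟩ | ⟨rfl, rfl⟩⟩ | ⟨e, i, hi, ⟨rfl, rfl⟩ | ⟨rfl, rfl⟩⟩ |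
    ⟨e, i, hi, ⟨rfl, rfl⟩ | ⟨rfl, rfl⟩⟩ <;>
  · have he : e ∉ sub.edgesWithin A := hA ▸ notMem_empty e
    simp only [vmap_mem_lift, inner_mem_lift, edgesWithin, mem_ofPred_eq] at hu hw he
    have := i.isLt
    grind

end IsSubdivision2k

theorem indep_subdivision_normalize_general {V W : Type*} [Fintype V]
    (G : SimpleGraph V) (k : ℕ) (hk : 1 ≤ k) (H : SimpleGraph W)
    (sub : IsSubdivision2k G k H)
    (S : Set W) (hS : IsIndepSet H S) :
    ∃ S' : Set W, IsIndepSet H S' ∧ S.ncard ≤ S'.ncard ∧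
      (∀ e : G.edgeSet, (S' ∩ Set.range (sub.inner e)).ncard = k) ∧
      (∀ e : G.edgeSet,
        ¬ (sub.vmap (sub.ends e).1 ∈ S' ∧ sub.vmap (sub.ends e).2 ∈ S')) := by
  classical
  set A₀ := sub.vmap ⁻¹' S
  set A := A₀ \ (fun e => (sub.ends e).2) '' sub.edgesWithin A₀
  have hA : sub.edgesWithin A = ∅ :=
    eq_empty_of_forall_notMem fun e he => he.2.2 ⟨e, ⟨he.1.1, he.2.1⟩, rfl⟩
  have hA₀ : A₀.ncard ≤ A.ncard + (sub.edgesWithin A₀).ncard :=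
    (ncard_le_ncard_sdiff_add_ncard _ _).trans (Nat.add_le_add_left ncard_image_le _)
  refine ⟨sub.lift A, sub.isIndepSet_lift A hA, ?_, fun e => ?_, fun e h => ?_⟩
  · calc S.ncard = A₀.ncard + ∑ e, (sub.inner e ⁻¹' S).ncard :=
          sub.ncard_eq_ncard_preimage_vmap_add_sum S
      _ ≤ A.ncard + ((sub.edgesWithin A₀).ncard + ∑ e, (sub.inner e ⁻¹' S).ncard) := by
          omega
      _ ≤ A.ncard + ∑ _e : G.edgeSet, k := by
          gcongr
          exact sub.ncard_edgesWithin_add_sum_le hS hk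
      _ = (sub.lift A).ncard := (sub.ncard_lift A).symm
  · rw [sub.ncard_inter_range_inner, sub.ncard_preimage_inner_lift]
  · rw [sub.vmap_mem_lift, sub.vmap_mem_lift] at h
    exact hA.subset h

/-- for every independent set `S` of the `(2k)`-subdivision `H` of `G`
there is an independent set `S'` of `H` with `|S'| ≥ |S|` containing exactly `k` of
the `2k` inner path nodes of every edge of `G`; consequently for every edge of `G`
at most one of its two endpoints belongs to `S'`. -/
theorem indep_subdivision_normalize {V W : Type*} [Fintype V] [Fintype W]
    (G : SimpleGraph V) (k : ℕ) (hk : 1 ≤ k) (H : SimpleGraph W)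
    (sub : IsSubdivision2k G k H)
    (S : Set W) (hS : IsIndepSet H S) :
    ∃ S' : Set W, IsIndepSet H S' ∧ S.ncard ≤ S'.ncard ∧
      (∀ e : G.edgeSet, (S' ∩ Set.range (sub.inner e)).ncard = k) ∧
      (∀ e : G.edgeSet,
        ¬ (sub.vmap (sub.ends e).1 ∈ S' ∧ sub.vmap (sub.ends e).2 ∈ S')) :=
  indep_subdivision_normalize_general G k hk H sub S hS
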